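/- arXiv:0805.2917 — 2 statements merged into one kernel-verified Lean document; each statement's English description precedes it below -/
import Mathlib

section
/- Let {V_i}_{i=1}^m be an (m,l,d)-reconstruction system such that tr((V_i*V_i)^{1/2}) ≥ (d·l/m)^{1/2} for every 1 ≤ i ≤ m. Then (d/l)·I_l is submajorized by P_q(V); consequently, for every unitarily invariant norm ‖·‖ on M_l(ℂ) with gauge function ψ, d·η_ψ(l) ≤ ‖P_q(V)‖, and for every increasing convex f : ℝ_{≥0} → ℝ with f(0) = 0, l·f(d/l) ≤ tr(f(P_q(V))). -/
open Matrix BigOperators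
open scoped ComplexOrder

noncomputable section

variable {𝕜 : Type*} [RCLike 𝕜]

/-- Sum of the `k` largest entries of a vector `x : Fin n → ℝ`,
as the supremum of the sums over subsets of cardinality `k`. -/
noncomputable def kMaxSum {n : ℕ} (x : Fin n → ℝ) (k : ℕ) : ℝ :=
  sSup ((fun t : Finset (Fin n) => ∑ i ∈ t, x i) '' {t : Finset (Fin n) | t.card = k})

/-- `x ≺_w y` : submajorization of real vectors. -/
def SubMajVec {n : ℕ} (x y : Fin n → ℝ) : Prop :=
  ∀ k : ℕ, k ≤ n → kMaxSum x k ≤ kMaxSum y k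

/-- `A ≺_w B` : submajorization of self-adjoint matrices (via eigenvalues). -/
def SubMajMat {n : ℕ} (A B : Matrix (Fin n) (Fin n) 𝕜) : Prop :=
  ∃ (hA : A.IsHermitian) (hB : B.IsHermitian), SubMajVec hA.eigenvalues hB.eigenvalues

/-- `A ≺ B` : majorization of self-adjoint matrices. -/
def MajMat {n : ℕ} (A B : Matrix (Fin n) (Fin n) 𝕜) : Prop :=
  SubMajMat A B ∧ A.trace = B.trace

/-- The q-potential `P_q(V) = Σ_{i,j} |V_i V_j*|²` of a reconstruction system. -/
noncomputable def qPotential {m l d : ℕ} (V : Fin m → Matrix (Fin l) (Fin d) 𝕜) :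
    Matrix (Fin l) (Fin l) 𝕜 :=
  ∑ i, ∑ j, (V i * (V j)ᴴ)ᴴ * (V i * (V j)ᴴ)

/-- `tr |A|² = tr(AᴴA)`, as a real number. -/
noncomputable def traceAbsSq {a b : ℕ} (A : Matrix (Fin a) (Fin b) 𝕜) : ℝ :=
  RCLike.re (Aᴴ * A).trace

/-- `tr |A| = tr((AᴴA)^{1/2})`, the sum of the singular values of `A`. -/
noncomputable def traceAbs {a b : ℕ} (A : Matrix (Fin a) (Fin b) 𝕜) : ℝ :=
  ∑ j, Real.sqrt ((Matrix.posSemidef_conjTranspose_mul_self A).1.eigenvalues j)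

/-- A unitarily invariant norm on `M_n(𝕜)`. -/
structure UINorm (n : ℕ) (𝕜 : Type*) [RCLike 𝕜] where
  N : Matrix (Fin n) (Fin n) 𝕜 → ℝ
  nonneg : ∀ A, 0 ≤ N A
  eq_zero : ∀ A, N A = 0 → A = 0
  triangle : ∀ A B, N (A + B) ≤ N A + N B
  smul_eq : ∀ (c : 𝕜) (A), N (c • A) = ‖c‖ * N A
  invariant : ∀ (A : Matrix (Fin n) (Fin n) 𝕜) (U W : Matrix.unitaryGroup (Fin n) 𝕜),
    N ((U : Matrix (Fin n) (Fin n) 𝕜) * A * (W : Matrix (Fin n) (Fin n) 𝕜)) = N A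

/-- `X ⊕ 0_t` : padding a square matrix with `t` zero rows and columns. -/
noncomputable def padMat {r : ℕ} (t : ℕ) (X : Matrix (Fin r) (Fin r) 𝕜) :
    Matrix (Fin (r + t)) (Fin (r + t)) 𝕜 :=
  Matrix.reindex finSumFinEquiv finSumFinEquiv (Matrix.fromBlocks X 0 0 0)

/-- A compatible unitarily invariant norm: a family of unitarily invariant norms,
one in each dimension, unchanged by adjoining zero rows and columns. -/
structure CUIN (𝕜 : Type*) [RCLike 𝕜] where
  N : ∀ n : ℕ, Matrix (Fin n) (Fin n) 𝕜 → ℝ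
  nonneg : ∀ n A, 0 ≤ N n A
  eq_zero : ∀ n A, N n A = 0 → A = 0
  triangle : ∀ n A B, N n (A + B) ≤ N n A + N n B
  smul_eq : ∀ n (c : 𝕜) (A), N n (c • A) = ‖c‖ * N n A
  invariant : ∀ n (A : Matrix (Fin n) (Fin n) 𝕜) (U W : Matrix.unitaryGroup (Fin n) 𝕜),
    N n ((U : Matrix (Fin n) (Fin n) 𝕜) * A * (W : Matrix (Fin n) (Fin n) 𝕜)) = N n A
  compatible : ∀ (r t : ℕ) (X : Matrix (Fin r) (Fin r) 𝕜), N (r + t) (padMat t X) = N r X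

namespace CUIN

/-- The associated symmetric gauge function, evaluated on a real vector:
`ψ(x) = ‖diag(x)‖`. -/
noncomputable def psi (Φ : CUIN 𝕜) {n : ℕ} (x : Fin n → ℝ) : ℝ :=
  Φ.N n (Matrix.diagonal fun i => (x i : 𝕜))

/-- `η_ψ(l) = ψ(e_l)/l = ‖I_l‖/l`. -/
noncomputable def eta (Φ : CUIN 𝕜) (l : ℕ) : ℝ := Φ.N l 1 / l

/-- A compatible u.i.n. is strict if `‖A‖ = tr(A)·η_ψ(l)` for positive semidefinite `A`
forces `A = (tr A / l)·I`. -/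
def Strict (Φ : CUIN 𝕜) : Prop :=
  ∀ (l : ℕ) (A : Matrix (Fin l) (Fin l) 𝕜), A.PosSemidef →
    Φ.N l A = RCLike.re A.trace * Φ.eta l → A = (A.trace / (l : 𝕜)) • 1

/-- A 2-strongly strict compatible u.i.n.: strict, and on `M_2` any two self-adjoint
matrices `A ≺ B` with equal norms are unitarily equivalent. -/
def TwoStronglyStrict (Φ : CUIN 𝕜) : Prop :=
  Φ.Strict ∧ ∀ A B : Matrix (Fin 2) (Fin 2) 𝕜, A.IsHermitian → B.IsHermitian →
    MajMat A B → Φ.N 2 A = Φ.N 2 B →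
    ∃ U ∈ Matrix.unitaryGroup (Fin 2) 𝕜, A = star U * B * U

end CUIN

/-- Worst-case reconstruction error for `p` lost packets:
`e_p^ψ(V) = max_{|K| = p} ‖V*V − V*E_K V‖ = max_{|K| = p} ‖Σ_{i ∈ K} Vᵢ*Vᵢ‖`. -/
noncomputable def errP {m l d : ℕ} (Φ : CUIN 𝕜) (p : ℕ)
    (V : Fin m → Matrix (Fin l) (Fin d) 𝕜) : ℝ :=
  sSup {r : ℝ | ∃ K : Finset (Fin m), K.card = p ∧ r = Φ.N d (∑ i ∈ K, (V i)ᴴ * V i)}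

/-- The constant `c_{m,l,d} = √( (d/((m−1)·m·l))·(1 − d/(ml)) )`. -/
noncomputable def cmld (m l d : ℕ) : ℝ :=
  Real.sqrt ((d : ℝ) / (((m : ℝ) - 1) * m * l) * (1 - (d : ℝ) / ((m : ℝ) * l)))

/-- A uniformly weighted projective rank-`l` `(m,l,d)`-protocol:
`Σᵢ Vᵢ*Vᵢ = I_d` and `VᵢVᵢ* = (d/(ml))·I_l` for every `i`. -/
def IsUWP {m l d : ℕ} (V : Fin m → Matrix (Fin l) (Fin d) 𝕜) : Prop :=
  (∑ i, (V i)ᴴ * V i = 1) ∧ ∀ i, V i * (V i)ᴴ = ((d : 𝕜) / ((m : 𝕜) * (l : 𝕜))) • 1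

/-- A uniformly weighted projective rank-`l` `(m,l,d)`-protocol, stated via projections:
`Σᵢ Vᵢ*Vᵢ = I_d` and `Vᵢ*Vᵢ = (d/(ml))·Pᵢ` with `Pᵢ` rank-`l` orthogonal projections. -/
def IsUWPProj {m l d : ℕ} (V : Fin m → Matrix (Fin l) (Fin d) 𝕜) : Prop :=
  (∑ i, (V i)ᴴ * V i = 1) ∧ ∀ i, ∃ P : Matrix (Fin d) (Fin d) 𝕜,
    Pᴴ = P ∧ P * P = P ∧ P.rank = l ∧ (V i)ᴴ * V i = ((d : 𝕜) / ((m : 𝕜) * (l : 𝕜))) • P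

/-- Padding a vector with zeros to length `d`. -/
def padVec {l : ℕ} (d : ℕ) (x : Fin l → ℝ) : Fin d → ℝ :=
  fun j => if h : (j : ℕ) < l then x ⟨j, h⟩ else 0

end

/-!
Everything follows from the trace bound `d ≤ tr P_q(V)`. Writing `S = ∑ i, V_i* V_i`, one has
`tr P_q(V) = tr S²`. Cauchy–Schwarz over the at most `l` nonzero singular values of `V_i` gives
`tr(V_i* V_i) ≥ (tr |V_i|)² / l ≥ d / m`, so `tr S ≥ d`, and then `tr S² ≥ (tr S)² / d ≥ d`.

Given `tr P_q(V) ≥ l · (d / l)`: the `k` largest eigenvalues of `P_q(V)` carry at least the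
fraction `k / l` of its trace, which is the submajorization; averaging the diagonalised
`P_q(V)` over the cyclic shifts of its eigenvalues gives `|tr P_q(V)| ‖I‖ ≤ l ‖P_q(V)‖` for any
unitarily invariant norm; and the trace inequality is Jensen's inequality plus monotonicity of `f`.
-/

open Finset

section Majorization

variable {n : ℕ}

lemma kMaxSum_const {k : ℕ} (hk : k ≤ n) (c : ℝ) : kMaxSum (fun _ : Fin n => c) k = k * c := by
  have hsums : (fun t : Finset (Fin n) => ∑ _i ∈ t, c) '' {t | t.card = k} = {(k : ℝ) * c} := by
    refine Set.eq_singleton_iff_nonempty_unique_mem.2 ⟨?_, ?_⟩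
    · obtain ⟨t, -, ht⟩ := exists_subset_card_eq (s := (univ : Finset (Fin n))) (by simpa using hk)
      exact ⟨_, t, ht, rfl⟩
    · rintro _ ⟨t, rfl : t.card = _, rfl⟩
      simp
  rw [kMaxSum, hsums, csSup_singleton]

lemma sum_le_kMaxSum (x : Fin n → ℝ) (t : Finset (Fin n)) : ∑ i ∈ t, x i ≤ kMaxSum x t.card :=
  le_csSup ((Set.toFinite _).image _).bddAbove ⟨t, rfl, rfl⟩

/-- Built greedily: the next index is a largest entry outside `t`, hence at least the average
of `x` there. -/
lemma exists_card_eq_mul_sum_le (x : Fin n → ℝ) {k : ℕ} (hk : k ≤ n) :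
    ∃ t : Finset (Fin n), t.card = k ∧ k * ∑ i, x i ≤ n * ∑ i ∈ t, x i := by
  induction k with
  | zero => exact ⟨∅, by simp⟩
  | succ k ih =>
    obtain ⟨t, rfl, ht⟩ := ih (by omega)
    have hne : tᶜ.Nonempty := by
      rw [← card_pos, card_compl, Fintype.card_fin]
      omega
    obtain ⟨j, hj, hjmax⟩ := exists_max_image tᶜ x hne
    have hjt : j ∉ t := mem_compl.1 hj
    have hcompl : ∑ i ∈ tᶜ, x i ≤ ((n : ℝ) - t.card) * x j := by
      have := sum_le_card_nsmul tᶜ x (x j) hjmax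
      rwa [card_compl, Fintype.card_fin, nsmul_eq_mul, Nat.cast_sub (by omega)] at this
    have hsplit := sum_compl_add_sum t x
    have hkn : (t.card : ℝ) + 1 ≤ n := by exact_mod_cast hk
    refine ⟨insert j t, card_insert_of_notMem hjt, ?_⟩
    rw [sum_insert hjt]
    push_cast
    nlinarith

lemma mul_sum_le_mul_kMaxSum (x : Fin n → ℝ) {k : ℕ} (hk : k ≤ n) :
    k * ∑ i, x i ≤ n * kMaxSum x k := by
  obtain ⟨t, rfl, ht⟩ := exists_card_eq_mul_sum_le x hk
  exact ht.trans (mul_le_mul_of_nonneg_left (sum_le_kMaxSum x t) n.cast_nonneg)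

lemma subMajVec_const_of_mul_le_sum (hn : 0 < n) {c : ℝ} {x : Fin n → ℝ}
    (h : n * c ≤ ∑ i, x i) : SubMajVec (fun _ => c) x := by
  intro k hk
  rw [kMaxSum_const hk]
  refine le_of_mul_le_mul_left ?_ (Nat.cast_pos.2 hn : (0 : ℝ) < n)
  calc (n : ℝ) * (k * c) = k * (n * c) := by ring
    _ ≤ k * ∑ i, x i := mul_le_mul_of_nonneg_left h k.cast_nonneg
    _ ≤ n * kMaxSum x k := mul_sum_le_mul_kMaxSum x hk

end Majorization

section Hermitian

variable {𝕜 : Type*} [RCLike 𝕜] {ι : Type*} [Fintype ι] [DecidableEq ι]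

lemma Matrix.IsHermitian.re_trace_eq_sum_eigenvalues {A : Matrix ι ι 𝕜} (hA : A.IsHermitian) :
    RCLike.re A.trace = ∑ i, hA.eigenvalues i := by
  simp [hA.trace_eq_sum_eigenvalues]

lemma Matrix.IsHermitian.re_trace_mul_self {A : Matrix ι ι 𝕜} (hA : A.IsHermitian) :
    RCLike.re (A * A).trace = ∑ i, hA.eigenvalues i ^ 2 := by
  conv_lhs => rw [hA.spectral_theorem, ← map_mul, Unitary.conjStarAlgAut_apply, trace_mul_cycle,
    UnitaryGroup.star_mul_self, one_mul, diagonal_mul_diagonal, trace_diagonal]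
  simp [sq]

lemma Matrix.IsHermitian.eigenvalues_ofReal_smul_one (r : ℝ)
    (h : ((r : 𝕜) • (1 : Matrix ι ι 𝕜)).IsHermitian) (i : ι) : h.eigenvalues i = r := by
  rw [h.eigenvalues_eq]
  simp [smul_mulVec, dotProduct_comm _ (WithLp.ofLp _), ← EuclideanSpace.inner_eq_star_dotProduct,
    RCLike.smul_re]

lemma subMajMat_ofReal_smul_one {n : ℕ} {B : Matrix (Fin n) (Fin n) 𝕜} (hB : B.IsHermitian)
    (hn : 0 < n) {r : ℝ} (h : n * r ≤ RCLike.re B.trace) :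
    SubMajMat ((r : 𝕜) • (1 : Matrix (Fin n) (Fin n) 𝕜)) B := by
  have hA : ((r : 𝕜) • (1 : Matrix (Fin n) (Fin n) 𝕜)).IsHermitian := by
    simp [IsHermitian, conjTranspose_smul]
  refine ⟨hA, hB, ?_⟩
  rw [funext (hA.eigenvalues_ofReal_smul_one r)]
  exact subMajVec_const_of_mul_le_sum hn (hB.re_trace_eq_sum_eigenvalues ▸ h)

end Hermitian

section Permutations

variable {ι R : Type*} [Fintype ι] [DecidableEq ι] [CommRing R]

lemma Equiv.Perm.permMatrix_mem_unitaryGroup [StarRing R] (σ : Equiv.Perm ι) :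
    σ.permMatrix R ∈ unitaryGroup ι R := by
  rw [mem_unitaryGroup_iff, star_eq_conjTranspose, conjTranspose_permMatrix, ← permMatrix_mul,
    inv_mul_cancel, permMatrix_one]

lemma Matrix.permMatrix_mul_diagonal_mul_star [StarRing R] (σ : Equiv.Perm ι) (w : ι → R) :
    σ.permMatrix R * diagonal w * star (σ.permMatrix R) = diagonal (w ∘ σ) := by
  rw [star_eq_conjTranspose, conjTranspose_permMatrix, Equiv.Perm.permMatrix,
    PEquiv.toMatrix_toPEquiv_mul, Equiv.Perm.permMatrix, PEquiv.mul_toMatrix_toPEquiv]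
  simp [Equiv.Perm.inv_def, submatrix_diagonal_equiv]

lemma Matrix.sum_diagonal_comp_addLeft [AddGroup ι] (w : ι → R) :
    ∑ s : ι, diagonal (w ∘ Equiv.addLeft s) = (∑ i, w i) • (1 : Matrix ι ι R) := by
  rw [smul_one_eq_diagonal]
  ext i j
  rcases eq_or_ne i j with rfl | hij
  · simpa [Matrix.sum_apply] using Equiv.sum_comp (Equiv.addRight i) w
  · simp [Matrix.sum_apply, diagonal_apply_ne _ hij]

end Permutations

namespace UINorm

variable {𝕜 : Type*} [RCLike 𝕜] {n : ℕ} (Ψ : UINorm n 𝕜)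

lemma map_zero : Ψ.N 0 = 0 := by
  simpa using Ψ.smul_eq 0 0

lemma map_sum_le {ι : Type*} (s : Finset ι) (f : ι → Matrix (Fin n) (Fin n) 𝕜) :
    Ψ.N (∑ i ∈ s, f i) ≤ ∑ i ∈ s, Ψ.N (f i) :=
  le_sum_of_subadditive Ψ.N Ψ.map_zero.le Ψ.triangle s f

lemma map_conj (U : unitaryGroup (Fin n) 𝕜) (A : Matrix (Fin n) (Fin n) 𝕜) :
    Ψ.N (U * A * star (U : Matrix (Fin n) (Fin n) 𝕜)) = Ψ.N A := by
  simpa using Ψ.invariant A U (star U)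

lemma map_eq_diagonal_eigenvalues {A : Matrix (Fin n) (Fin n) 𝕜} (hA : A.IsHermitian) :
    Ψ.N A = Ψ.N (diagonal (RCLike.ofReal ∘ hA.eigenvalues)) := by
  conv_lhs => rw [hA.spectral_theorem, Unitary.conjStarAlgAut_apply]
  exact Ψ.map_conj _ _

lemma map_diagonal_comp_perm (w : Fin n → 𝕜) (σ : Equiv.Perm (Fin n)) :
    Ψ.N (diagonal (w ∘ σ)) = Ψ.N (diagonal w) := by
  rw [← permMatrix_mul_diagonal_mul_star]
  exact Ψ.map_conj ⟨_, σ.permMatrix_mem_unitaryGroup⟩ _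

/-- Averaging `diagonal w` over the cyclic shifts of its entries gives `(∑ i, w i) • 1`. -/
lemma norm_sum_mul_le [NeZero n] (w : Fin n → 𝕜) :
    ‖∑ i, w i‖ * Ψ.N 1 ≤ n * Ψ.N (diagonal w) :=
  calc ‖∑ i, w i‖ * Ψ.N 1 = Ψ.N (∑ s : Fin n, diagonal (w ∘ Equiv.addLeft s)) := by
        rw [sum_diagonal_comp_addLeft, Ψ.smul_eq]
    _ ≤ ∑ s : Fin n, Ψ.N (diagonal (w ∘ Equiv.addLeft s)) := Ψ.map_sum_le _ _
    _ = n * Ψ.N (diagonal w) := by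
        simp only [Ψ.map_diagonal_comp_perm, sum_const, card_univ, Fintype.card_fin, nsmul_eq_mul]

lemma norm_trace_mul_le [NeZero n] {A : Matrix (Fin n) (Fin n) 𝕜} (hA : A.IsHermitian) :
    ‖A.trace‖ * Ψ.N 1 ≤ n * Ψ.N A := by
  rw [hA.trace_eq_sum_eigenvalues, Ψ.map_eq_diagonal_eigenvalues hA]
  exact Ψ.norm_sum_mul_le _

end UINorm

lemma card_mul_le_sum_of_convexOn {ι : Type*} [Fintype ι] [Nonempty ι] {f : ℝ → ℝ}
    (hmono : MonotoneOn f (Set.Ici 0)) (hconv : ConvexOn ℝ (Set.Ici 0) f) {c : ℝ} (hc : 0 ≤ c)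
    {x : ι → ℝ} (hx : ∀ i, 0 ≤ x i) (h : Fintype.card ι * c ≤ ∑ i, x i) :
    Fintype.card ι * f c ≤ ∑ i, f (x i) := by
  have hcard : (0 : ℝ) < Fintype.card ι := by exact_mod_cast Fintype.card_pos
  have hmean : ∑ i, (Fintype.card ι : ℝ)⁻¹ • x i = (∑ i, x i) / Fintype.card ι := by
    rw [← smul_sum, smul_eq_mul, inv_mul_eq_div]
  have hjensen := hconv.map_sum_le (t := univ) (w := fun _ => (Fintype.card ι : ℝ)⁻¹)
    (fun _ _ => by positivity) (by simp [hcard.ne']) (fun i _ => hx i)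
  rw [hmean, ← smul_sum, smul_eq_mul] at hjensen
  have hmono' : f c ≤ f ((∑ i, x i) / Fintype.card ι) :=
    hmono hc (div_nonneg (sum_nonneg fun i _ => hx i) hcard.le)
      ((le_div_iff₀ hcard).2 (by linarith))
  rw [← le_inv_mul_iff₀ hcard]
  exact hmono'.trans hjensen

section TraceBounds

variable {𝕜 : Type*} [RCLike 𝕜]

lemma traceAbsSq_eq_sum_eigenvalues {a b : ℕ} (A : Matrix (Fin a) (Fin b) 𝕜) :
    traceAbsSq A = ∑ j, (posSemidef_conjTranspose_mul_self A).1.eigenvalues j :=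
  (posSemidef_conjTranspose_mul_self A).1.re_trace_eq_sum_eigenvalues

/-- Cauchy–Schwarz over the at most `rank A ≤ a` nonzero singular values. -/
lemma traceAbs_sq_le {a b : ℕ} (A : Matrix (Fin a) (Fin b) 𝕜) :
    traceAbs A ^ 2 ≤ a * traceAbsSq A := by
  set hP := posSemidef_conjTranspose_mul_self A
  set lam := hP.1.eigenvalues
  set T := univ.filter fun j => lam j ≠ 0
  have hcard : T.card ≤ a := by
    rw [← Fintype.card_subtype, ← hP.1.rank_eq_card_non_zero_eigs, rank_conjTranspose_mul_self]
    simpa using A.rank_le_card_height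
  have hsupp : traceAbs A = ∑ j ∈ T, √(lam j) :=
    (sum_filter_of_ne (p := fun j => lam j ≠ 0) fun _ _ hj h0 =>
      hj (Real.sqrt_eq_zero'.2 h0.le)).symm
  calc traceAbs A ^ 2 = (∑ j ∈ T, √(lam j)) ^ 2 := by rw [hsupp]
    _ ≤ T.card * ∑ j ∈ T, √(lam j) ^ 2 := sq_sum_le_card_mul_sum_sq
    _ = T.card * ∑ j ∈ T, lam j := by
        rw [sum_congr rfl fun j _ => Real.sq_sqrt (hP.eigenvalues_nonneg j)]
    _ ≤ a * ∑ j, lam j := mul_le_mul (by exact_mod_cast hcard)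
        (sum_le_sum_of_subset_of_nonneg (subset_univ T) fun j _ _ => hP.eigenvalues_nonneg j)
        (sum_nonneg fun j _ => hP.eigenvalues_nonneg j) a.cast_nonneg
    _ = a * traceAbsSq A := by rw [traceAbsSq_eq_sum_eigenvalues]

lemma le_sum_sq_of_le_sum {ι : Type*} [Fintype ι] {x : ι → ℝ} (h : Fintype.card ι ≤ ∑ i, x i) :
    Fintype.card ι ≤ ∑ i, x i ^ 2 := by
  have hsq : 0 ≤ ∑ i, (x i - 1) ^ 2 := sum_nonneg fun i _ => sq_nonneg _
  simp only [sub_sq, one_pow, mul_one, sum_add_distrib, sum_sub_distrib, ← mul_sum, sum_const,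
    card_univ, nsmul_eq_mul] at hsq
  linarith

variable {m l d : ℕ}

lemma posSemidef_qPotential (V : Fin m → Matrix (Fin l) (Fin d) 𝕜) : (qPotential V).PosSemidef :=
  posSemidef_sum _ fun _ _ => posSemidef_sum _ fun _ _ => posSemidef_conjTranspose_mul_self _

lemma trace_qPotential (V : Fin m → Matrix (Fin l) (Fin d) 𝕜) :
    (qPotential V).trace = ((∑ i, (V i)ᴴ * V i) * ∑ i, (V i)ᴴ * V i).trace := by
  simp only [qPotential, sum_mul_sum, trace_sum, conjTranspose_mul, conjTranspose_conjTranspose]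
  refine sum_congr rfl fun i _ => sum_congr rfl fun j _ => ?_
  rw [Matrix.mul_assoc, trace_mul_comm (V j)]
  simp only [Matrix.mul_assoc]

lemma le_re_trace_qPotential (hl : 0 < l) (hm : 0 < m) (V : Fin m → Matrix (Fin l) (Fin d) 𝕜)
    (htr : ∀ i, √((d : ℝ) * l / m) ≤ traceAbs (V i)) :
    (d : ℝ) ≤ RCLike.re (qPotential V).trace := by
  have hm' : (0 : ℝ) < m := by exact_mod_cast hm
  have hterm : ∀ i, (d : ℝ) / m ≤ traceAbsSq (V i) := by
    intro i
    have hsq : (d : ℝ) * l / m ≤ traceAbs (V i) ^ 2 := (Real.sqrt_le_iff.1 (htr i)).2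
    refine le_of_mul_le_mul_left ?_ (Nat.cast_pos.2 hl : (0 : ℝ) < l)
    calc (l : ℝ) * (d / m) = d * l / m := by ring
      _ ≤ l * traceAbsSq (V i) := hsq.trans (traceAbs_sq_le (V i))
  have hS := (posSemidef_sum univ fun i _ => posSemidef_conjTranspose_mul_self (V i)).1
  have htrS : (Fintype.card (Fin d) : ℝ) ≤ ∑ k, hS.eigenvalues k := by
    rw [← hS.re_trace_eq_sum_eigenvalues, trace_sum, map_sum, Fintype.card_fin]
    calc (d : ℝ) = ∑ _i : Fin m, (d : ℝ) / m := by simp [mul_div_cancel₀ _ hm'.ne']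
      _ ≤ ∑ i, traceAbsSq (V i) := sum_le_sum fun i _ => hterm i
  rw [trace_qPotential, hS.re_trace_mul_self]
  simpa using le_sum_sq_of_le_sum htrS

end TraceBounds

lemma nonempty_of_isUnit_sum {ι R : Type*} [Fintype ι] [Semiring R] [Nontrivial R] {f : ι → R}
    (h : IsUnit (∑ i, f i)) : Nonempty ι := by
  by_contra hι
  rw [not_nonempty_iff] at hι
  simp at h

theorem stmt4 (m l d : ℕ) (hl : 0 < l) (hld : l < d)
    (V : Fin m → Matrix (Fin l) (Fin d) ℂ)
    (hinv : IsUnit (∑ i, (V i)ᴴ * V i))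
    (htr : ∀ i, Real.sqrt ((d : ℝ) * l / m) ≤ traceAbs (V i)) :
    SubMajMat (((d : ℂ) / (l : ℂ)) • (1 : Matrix (Fin l) (Fin l) ℂ)) (qPotential V) ∧
    (∀ Ψ : UINorm l ℂ, (d : ℝ) * (Ψ.N 1 / l) ≤ Ψ.N (qPotential V)) ∧
    (∀ f : ℝ → ℝ, MonotoneOn f (Set.Ici 0) → ConvexOn ℝ (Set.Ici 0) f → f 0 = 0 →
      ∀ hP : (qPotential V).IsHermitian,
        (l : ℝ) * f ((d : ℝ) / l) ≤ ∑ i, f (hP.eigenvalues i)) := by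
  have : Nonempty (Fin d) := ⟨⟨0, hl.trans hld⟩⟩
  have : NeZero l := ⟨hl.ne'⟩
  have hm : 0 < m := Fin.pos_iff_nonempty.2 (nonempty_of_isUnit_sum hinv)
  have hP := posSemidef_qPotential V
  have htrace : (d : ℝ) ≤ RCLike.re (qPotential V).trace := le_re_trace_qPotential hl hm V htr
  have hl' : (0 : ℝ) < l := Nat.cast_pos.2 hl
  have hdl : (l : ℝ) * (d / l) = d := mul_div_cancel₀ _ hl'.ne'
  refine ⟨?_, fun Ψ => ?_, fun f hmono hconv _ _ => ?_⟩
  · have hcoe : (d : ℂ) / l = ((d / l : ℝ) : ℂ) := by push_cast; rfl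
    rw [hcoe]
    exact subMajMat_ofReal_smul_one hP.1 hl (hdl.symm ▸ htrace)
  · rw [mul_div_assoc', div_le_iff₀ hl', mul_comm _ (l : ℝ)]
    calc (d : ℝ) * Ψ.N 1 ≤ ‖(qPotential V).trace‖ * Ψ.N 1 :=
          mul_le_mul_of_nonneg_right (htrace.trans (RCLike.re_le_norm _)) (Ψ.nonneg 1)
      _ ≤ l * Ψ.N (qPotential V) := Ψ.norm_trace_mul_le hP.1
  · simpa using card_mul_le_sum_of_convexOn hmono hconv (by positivity) hP.eigenvalues_nonneg
      (by simpa [hdl, ← hP.1.re_trace_eq_sum_eigenvalues] using htrace)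
end

section
/- Let ‖·‖ be a compatible unitarily invariant norm with associated symmetric gauge function ψ, and let {V_i}_{i=1}^m be an (m,l,d)-protocol. Then max_{1≤j≤m} ‖V_j V_j*‖ ≥ d·η_ψ(l)/m. Moreover, if ‖·‖ is strict, then equality holds if and only if {V_i}_{i=1}^m is a uniformly weighted projective rank-l (m,l,d)-protocol. -/
open Matrix BigOperators
open scoped ComplexOrder

/-!
For positive semidefinite `A ∈ M_l`, averaging the `l` cyclic shifts of its eigenvalue diagonal
gives `tr(A)/l · I`, so the triangle inequality and unitary invariance yield
`tr(A) · η_ψ(l) ≤ ‖A‖`. The traces of the `VⱼVⱼ*` add up to `tr(Σ Vⱼ*Vⱼ) = d`, hence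
`d · η_ψ(l) ≤ Σⱼ ‖VⱼVⱼ*‖ ≤ m · maxⱼ ‖VⱼVⱼ*‖`. At equality every step is tight, and strictness
turns `‖VⱼVⱼ*‖ = tr(VⱼVⱼ*) · η_ψ(l)` into `VⱼVⱼ* = (d/(ml)) · I`; finally `VVᴴ = c · I` holds
exactly when `VᴴV = c · P` for an orthogonal projection `P` of rank `l`.
-/

section

variable {𝕜 : Type*} [RCLike 𝕜]

namespace Matrix

lemma permMatrix_mem_unitaryGroup {n R : Type*} [DecidableEq n] [Fintype n] [CommRing R]
    [StarRing R] (σ : Equiv.Perm n) : σ.permMatrix R ∈ unitaryGroup n R := by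
  rw [mem_unitaryGroup_iff, star_eq_conjTranspose, conjTranspose_permMatrix, ← permMatrix_mul,
    inv_mul_cancel, permMatrix_one]

lemma isUnit_of_rank_eq_card {n K : Type*} [Fintype n] [DecidableEq n] [Field K]
    {A : Matrix n n K} (h : A.rank = Fintype.card n) : IsUnit A := by
  have hrange : LinearMap.range A.mulVecLin = ⊤ :=
    Submodule.eq_top_of_finrank_eq (by rw [← rank, h, Module.finrank_fintype_fun_eq_card])
  exact mulVec_surjective_iff_isUnit.mp (LinearMap.range_eq_top.mp hrange)

lemma rank_smul_of_ne_zero {m n K : Type*} [Fintype n] [Field K] {c : K} (hc : c ≠ 0)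
    (M : Matrix m n K) : (c • M).rank = M.rank :=
  rank_smul_of_mem_nonZeroDivisors M (mem_nonZeroDivisors_of_ne_zero hc)

lemma IsHermitian.ofReal_re_trace {n : Type*} [Fintype n] {A : Matrix n n 𝕜}
    (hA : A.IsHermitian) : (RCLike.re A.trace : 𝕜) = A.trace := by
  rw [← RCLike.conj_eq_iff_re, starRingEnd_apply, ← trace_conjTranspose, hA.eq]

end Matrix

namespace CUIN

variable (Φ : CUIN 𝕜) {n : ℕ}

lemma eta_nonneg : 0 ≤ Φ.eta n :=
  div_nonneg (Φ.nonneg n 1) n.cast_nonneg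

lemma eta_pos [NeZero n] : 0 < Φ.eta n := by
  refine div_pos ((Φ.nonneg n 1).lt_of_ne fun h => ?_) (Nat.cast_pos.mpr n.pos_of_neZero)
  simpa using congrFun₂ (Φ.eq_zero n 1 h.symm) 0 0

lemma N_ofReal_smul_one [NeZero n] (r : ℝ) :
    Φ.N n ((r : 𝕜) • 1) = |r| * n * Φ.eta n := by
  have hn : (n : ℝ) ≠ 0 := Nat.cast_ne_zero.mpr (NeZero.ne n)
  rw [Φ.smul_eq, RCLike.norm_ofReal, eta, mul_assoc, mul_div_cancel₀ _ hn]

lemma N_unitary_conj (A : Matrix (Fin n) (Fin n) 𝕜) {U : Matrix (Fin n) (Fin n) 𝕜}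
    (hU : U ∈ unitaryGroup (Fin n) 𝕜) : Φ.N n (U * A * star U) = Φ.N n A :=
  Φ.invariant n A ⟨U, hU⟩ ⟨star U, Unitary.star_mem hU⟩

lemma psi_comp_perm (x : Fin n → ℝ) (σ : Equiv.Perm (Fin n)) : Φ.psi (x ∘ σ) = Φ.psi x := by
  have hconj : σ.permMatrix 𝕜 * diagonal (fun i => (x i : 𝕜)) * star (σ.permMatrix 𝕜)
      = diagonal fun i => (x (σ i) : 𝕜) := by
    rw [star_eq_conjTranspose, conjTranspose_permMatrix, Equiv.Perm.permMatrix,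
      Equiv.Perm.permMatrix, PEquiv.toMatrix_toPEquiv_mul, PEquiv.mul_toMatrix_toPEquiv]
    simp [← Equiv.Perm.inv_def]
  simp only [psi, Function.comp_apply]
  rw [← hconj, N_unitary_conj Φ _ (permMatrix_mem_unitaryGroup σ)]

lemma N_eq_psi_eigenvalues {A : Matrix (Fin n) (Fin n) 𝕜} (hA : A.IsHermitian) :
    Φ.N n A = Φ.psi hA.eigenvalues := by
  conv_lhs => rw [hA.spectral_theorem, Unitary.conjStarAlgAut_apply]
  exact N_unitary_conj Φ _ hA.eigenvectorUnitary.2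

lemma abs_sum_mul_eta_le_psi (x : Fin n → ℝ) : |∑ i, x i| * Φ.eta n ≤ Φ.psi x := by
  rcases n.eq_zero_or_pos with rfl | hn
  · rw [eta, Nat.cast_zero, div_zero, mul_zero]
    exact Φ.nonneg 0 _
  have : NeZero n := ⟨hn.ne'⟩
  have hshifts : ∑ k : Fin n, diagonal (fun i => (x (i + k) : 𝕜))
      = ((∑ i, x i : ℝ) : 𝕜) • 1 := by
    ext i j
    rcases eq_or_ne i j with rfl | hij
    · simp only [Matrix.sum_apply, diagonal_apply_eq, Matrix.smul_apply, one_apply_eq,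
        smul_eq_mul, mul_one]
      exact_mod_cast Equiv.sum_comp (Equiv.addLeft i) x
    · simp [Matrix.sum_apply, diagonal_apply_ne _ hij, one_apply_ne hij]
  have hsum : n * (|∑ i, x i| * Φ.eta n) ≤ n * Φ.psi x :=
    calc n * (|∑ i, x i| * Φ.eta n) = Φ.N n (((∑ i, x i : ℝ) : 𝕜) • 1) := by
          rw [N_ofReal_smul_one]; ring
      _ ≤ ∑ k : Fin n, Φ.N n (diagonal fun i => (x (i + k) : 𝕜)) := by
          rw [← hshifts]
          exact Finset.le_sum_nonempty_of_subadditive _ (Φ.triangle n) Finset.univ_nonempty _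
      _ = ∑ k : Fin n, Φ.psi (x ∘ Equiv.addRight k) := rfl
      _ = n * Φ.psi x := by simp only [psi_comp_perm, Finset.sum_const, Finset.card_univ,
          Fintype.card_fin, nsmul_eq_mul]
  exact le_of_mul_le_mul_left hsum (Nat.cast_pos.mpr hn)

lemma re_trace_mul_eta_le_N {A : Matrix (Fin n) (Fin n) 𝕜} (hA : A.IsHermitian) :
    RCLike.re A.trace * Φ.eta n ≤ Φ.N n A := by
  have htrace : RCLike.re A.trace = ∑ i, hA.eigenvalues i := by
    simp [hA.trace_eq_sum_eigenvalues]
  calc RCLike.re A.trace * Φ.eta n ≤ |RCLike.re A.trace| * Φ.eta n :=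
        mul_le_mul_of_nonneg_right (le_abs_self _) Φ.eta_nonneg
    _ ≤ Φ.N n A := by
        rw [htrace, N_eq_psi_eigenvalues Φ hA]
        exact abs_sum_mul_eta_le_psi Φ _

end CUIN

lemma CUIN.Strict.eq_ofReal_smul_one {Φ : CUIN 𝕜} (hΦ : Φ.Strict) {n : ℕ}
    {A : Matrix (Fin n) (Fin n) 𝕜} (hA : A.PosSemidef)
    (hN : Φ.N n A = RCLike.re A.trace * Φ.eta n) :
    A = ((RCLike.re A.trace / n : ℝ) : 𝕜) • 1 := by
  rw [RCLike.ofReal_div, hA.1.ofReal_re_trace, RCLike.ofReal_natCast]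
  exact hΦ n A hA hN

namespace Matrix

variable {m n : Type*} [Fintype m] [DecidableEq m] [Fintype n] [DecidableEq n]

lemma self_mul_conjTranspose_eq_smul_one_iff {V : Matrix m n 𝕜} {c : ℝ} (hc : c ≠ 0) :
    V * Vᴴ = (c : 𝕜) • 1 ↔ ∃ P : Matrix n n 𝕜,
      Pᴴ = P ∧ P * P = P ∧ P.rank = Fintype.card m ∧ Vᴴ * V = (c : 𝕜) • P := by
  have hc' : (c : 𝕜) ≠ 0 := RCLike.ofReal_ne_zero.mpr hc
  constructor
  · intro h
    have hsq : (Vᴴ * V) * (Vᴴ * V) = (c : 𝕜) • (Vᴴ * V) := by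
      rw [Matrix.mul_assoc, ← Matrix.mul_assoc V, h, Matrix.smul_mul, Matrix.one_mul,
        Matrix.mul_smul]
    refine ⟨(c : 𝕜)⁻¹ • (Vᴴ * V), ?_, ?_, ?_, ?_⟩
    · simp [conjTranspose_smul]
    · rw [smul_mul_smul_comm, hsq, smul_smul, mul_assoc, inv_mul_cancel₀ hc', mul_one]
    · rw [rank_smul_of_ne_zero (inv_ne_zero hc'), rank_conjTranspose_mul_self,
        ← rank_self_mul_conjTranspose, h, rank_smul_of_ne_zero hc', rank_one]
    · rw [smul_smul, mul_inv_cancel₀ hc', one_smul]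
  · rintro ⟨P, -, hPP, hrank, hVV⟩
    have hcube : V * Vᴴ * (V * Vᴴ) * (V * Vᴴ) = ((c : 𝕜) • 1) * (V * Vᴴ) * (V * Vᴴ) := by
      calc V * Vᴴ * (V * Vᴴ) * (V * Vᴴ) = V * ((Vᴴ * V) * (Vᴴ * V)) * Vᴴ := by
            simp only [Matrix.mul_assoc]
        _ = (c : 𝕜) • (V * (Vᴴ * V) * Vᴴ) := by
            rw [hVV, smul_mul_smul_comm, hPP]
            simp only [Matrix.mul_smul, Matrix.smul_mul, smul_smul]
        _ = ((c : 𝕜) • 1) * (V * Vᴴ) * (V * Vᴴ) := by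
            simp only [Matrix.smul_mul, Matrix.one_mul, Matrix.mul_assoc]
    have hunit : IsUnit (V * Vᴴ) := isUnit_of_rank_eq_card (by
      rw [rank_self_mul_conjTranspose, ← rank_conjTranspose_mul_self, hVV,
        rank_smul_of_ne_zero hc', hrank])
    exact hunit.mul_right_cancel (hunit.mul_right_cancel hcube)

end Matrix

lemma eq_of_le_of_le_of_sum_eq_card_mul {ι : Type*} [Fintype ι] {a b : ι → ℝ} {s : ℝ}
    (hab : ∀ i, a i ≤ b i) (hbs : ∀ i, b i ≤ s) (hsum : ∑ i, a i = Fintype.card ι * s) (i : ι) :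
    a i = s ∧ b i = s := by
  have has : a i = s := (Finset.sum_eq_sum_iff_of_le fun j _ => (hab j).trans (hbs j)).mp
    (by simpa using hsum) i (Finset.mem_univ i)
  exact ⟨has, le_antisymm (hbs i) (has ▸ hab i)⟩

section Protocol

variable {ι : Type*} [Fintype ι] {l d : ℕ} {V : ι → Matrix (Fin l) (Fin d) 𝕜}

lemma sum_re_trace_self_mul_conjTranspose (hV : ∑ i, (V i)ᴴ * V i = 1) :
    ∑ i, RCLike.re (V i * (V i)ᴴ).trace = d := by
  simp_rw [trace_mul_comm (V _), ← map_sum, ← trace_sum, hV, trace_one, Fintype.card_fin,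
    RCLike.natCast_re]

lemma CUIN.mul_eta_le_sum_N (Φ : CUIN 𝕜) (hV : ∑ i, (V i)ᴴ * V i = 1) :
    d * Φ.eta l ≤ ∑ i, Φ.N l (V i * (V i)ᴴ) := by
  rw [← sum_re_trace_self_mul_conjTranspose hV, Finset.sum_mul]
  exact Finset.sum_le_sum fun i _ => Φ.re_trace_mul_eta_le_N (isHermitian_mul_conjTranspose_self _)

lemma CUIN.Strict.self_mul_conjTranspose_eq_smul_one {Φ : CUIN 𝕜} (hΦ : Φ.Strict) [NeZero l]
    (hV : ∑ i, (V i)ᴴ * V i = 1) {S : ℝ} (hS : ∀ i, Φ.N l (V i * (V i)ᴴ) ≤ S)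
    (hdS : d * Φ.eta l = Fintype.card ι * S) (i : ι) :
    V i * (V i)ᴴ = ((d / (Fintype.card ι * l) : ℝ) : 𝕜) • 1 := by
  have hsum : ∑ i, RCLike.re (V i * (V i)ᴴ).trace * Φ.eta l = Fintype.card ι * S := by
    rw [← Finset.sum_mul, sum_re_trace_self_mul_conjTranspose hV, hdS]
  obtain ⟨htrS, hNS⟩ := eq_of_le_of_le_of_sum_eq_card_mul
    (fun i => Φ.re_trace_mul_eta_le_N (isHermitian_mul_conjTranspose_self (V i))) hS hsum i
  have hcard : (Fintype.card ι : ℝ) ≠ 0 := Nat.cast_ne_zero.mpr (Fintype.card_pos_iff.mpr ⟨i⟩).ne'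
  have htr : RCLike.re (V i * (V i)ᴴ).trace = d / Fintype.card ι := by
    rw [eq_div_iff hcard]
    exact mul_right_cancel₀ Φ.eta_pos.ne' (by rw [hdS, ← htrS]; ring)
  rw [hΦ.eq_ofReal_smul_one (posSemidef_self_mul_conjTranspose _) (hNS.trans htrS.symm), htr,
    div_div]

end Protocol

end

theorem stmt6 {𝕜 : Type*} [RCLike 𝕜] (m l d : ℕ) (hm : 0 < m) (hl : 0 < l) (hld : l < d)
    (Φ : CUIN 𝕜) (V : Fin m → Matrix (Fin l) (Fin d) 𝕜)
    (hproto : ∑ i, (V i)ᴴ * V i = 1) :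
    (d : ℝ) * Φ.eta l / m ≤
      Finset.sup' (Finset.univ : Finset (Fin m)) ⟨⟨0, hm⟩, Finset.mem_univ _⟩
        (fun j => Φ.N l (V j * (V j)ᴴ)) ∧
    (Φ.Strict →
      (Finset.sup' (Finset.univ : Finset (Fin m)) ⟨⟨0, hm⟩, Finset.mem_univ _⟩
          (fun j => Φ.N l (V j * (V j)ᴴ)) = (d : ℝ) * Φ.eta l / m ↔ IsUWPProj V)) := by
  have : NeZero l := ⟨hl.ne'⟩
  have hm' : (0 : ℝ) < m := Nat.cast_pos.mpr hm
  have hc : (d / (m * l) : ℝ) ≠ 0 := by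
    have : (0 : ℝ) < d := Nat.cast_pos.mpr (hl.trans hld)
    positivity
  set S := Finset.sup' Finset.univ ⟨⟨0, hm⟩, Finset.mem_univ _⟩ fun j => Φ.N l (V j * (V j)ᴴ)
  have hS j : Φ.N l (V j * (V j)ᴴ) ≤ S :=
    Finset.le_sup' (fun j => Φ.N l (V j * (V j)ᴴ)) (Finset.mem_univ j)
  have hlower : d * Φ.eta l ≤ m * S := by
    simpa using (Φ.mul_eta_le_sum_N hproto).trans (Finset.sum_le_sum fun j _ => hS j)
  have huwp : IsUWPProj V ↔ ∀ j, V j * (V j)ᴴ = ((d / (m * l) : ℝ) : 𝕜) • 1 := by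
    simp only [IsUWPProj, hproto, true_and, self_mul_conjTranspose_eq_smul_one_iff hc,
      Fintype.card_fin]
    push_cast
    rfl
  refine ⟨(div_le_iff₀' hm').mpr hlower, fun hΦ => ⟨fun heq => huwp.mpr ?_, fun h => ?_⟩⟩
  · simpa using hΦ.self_mul_conjTranspose_eq_smul_one hproto hS (by simp [heq]; field_simp)
  · have hN j : Φ.N l (V j * (V j)ᴴ) = d * Φ.eta l / m := by
      rw [huwp.mp h j, Φ.N_ofReal_smul_one, abs_of_nonneg (by positivity)]
      field_simp
    simp only [S, hN]
    exact Finset.sup'_const _ _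
end
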